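/- Let q satisfy the fluid ODE q'_t = λ - θ·(q_t - 1)⁺ - μ·(q_t ⊓ 1) with λ < μ and q_0 < 1 (or λ = μ and q_0 < 1). Then there exists t₀ ≥ 0 such that q_t < 1 for all t ≥ t₀. -/

import Mathlib

/-!
Below `1` the equation is linear, `q' = λ - μ q`, and since `λ ≤ μ` the flow is pushed up more
slowly than the exponential barrier `1 - (1 - q t₁) e^{-2μ (t - t₁)}` rises, so once `q < 1` it
stays there. At or above `1` the drift is at most `λ - μ`, so when `λ < μ` the path cannot stay
above `1` forever; when `λ = μ` it starts below `1`.
-/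

theorem image_le_of_hasDerivAt_lt_deriv_boundary {f f' B B' : ℝ → ℝ} {a : ℝ}
    (hf : ∀ t, a ≤ t → HasDerivAt f (f' t) t) (hB : ∀ t, HasDerivAt B (B' t) t)
    (ha : f a ≤ B a) (bound : ∀ t, a ≤ t → f t = B t → f' t < B' t) :
    ∀ t, a ≤ t → f t ≤ B t := fun t ht =>
  image_le_of_deriv_right_lt_deriv_boundary (b := t)
    (fun s hs => (hf s hs.1).continuousAt.continuousWithinAt)
    (fun s hs => (hf s hs.1).hasDerivWithinAt) ha hB (fun s hs => bound s hs.1)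
    ⟨ht, le_rfl⟩

noncomputable def fluidDrift (lam μ θ x : ℝ) : ℝ := lam - θ * max (x - 1) 0 - μ * min x 1

theorem fluidDrift_of_le_one {lam μ θ x : ℝ} (hx : x ≤ 1) :
    fluidDrift lam μ θ x = lam - μ * x := by
  simp [fluidDrift, hx]

theorem fluidDrift_le_of_one_le {lam μ θ x : ℝ} (hθ : 0 ≤ θ) (hx : 1 ≤ x) :
    fluidDrift lam μ θ x ≤ lam - μ := by
  have : 0 ≤ θ * max (x - 1) 0 := by positivity
  simp only [fluidDrift, min_eq_right hx]
  linarith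

theorem fluid_lt_one_of_lt_one {lam μ θ : ℝ} (hμ : 0 < μ) (hle : lam ≤ μ) {q : ℝ → ℝ}
    {t₁ : ℝ} (hq : ∀ t, t₁ ≤ t → HasDerivAt q (fluidDrift lam μ θ (q t)) t) (h₁ : q t₁ < 1) :
    ∀ t, t₁ ≤ t → q t < 1 := by
  set c := 1 - q t₁
  let E : ℝ → ℝ := fun t => Real.exp (-(2 * μ) * (t - t₁))
  have hcE : ∀ t, 0 < c * E t := fun t => mul_pos (sub_pos.mpr h₁) (Real.exp_pos _)
  have hbarrier_deriv : ∀ t, HasDerivAt (fun s => 1 - c * E s) (c * E t * (2 * μ)) t := by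
    intro t
    have := ((((hasDerivAt_id' t).sub_const t₁).const_mul (-(2 * μ))).exp.const_mul c).const_sub 1
    exact this.congr_deriv (by ring)
  have hle_barrier := image_le_of_hasDerivAt_lt_deriv_boundary hq hbarrier_deriv
    (by simp [E, c]) <| by
      intro t _ hqt
      rw [fluidDrift_of_le_one (by linarith [hcE t]), hqt]
      nlinarith [hcE t]
  intro t ht
  linarith [hle_barrier t ht, hcE t]

theorem exists_fluid_lt_one {lam μ θ : ℝ} (hθ : 0 ≤ θ) (hlt : lam < μ) {q : ℝ → ℝ}
    (hq : ∀ t, 0 ≤ t → HasDerivAt q (fluidDrift lam μ θ (q t)) t) :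
    ∃ t, 0 ≤ t ∧ q t < 1 := by
  by_contra! hge
  -- half the slope `λ - μ`, so that the comparison with the line is strict
  have hline := image_le_of_hasDerivAt_lt_deriv_boundary hq
    (fun t => ((hasDerivAt_id' t).const_mul ((lam - μ) / 2)).const_add (q 0)) (by simp) <| by
      intro t ht _
      have := fluidDrift_le_of_one_le (lam := lam) (μ := μ) hθ (hge t ht)
      linarith
  set T := 2 * q 0 / (μ - lam)
  have hT : 0 ≤ T := div_nonneg (by linarith [hge 0 le_rfl]) (by linarith)
  have hline_T : q 0 + (lam - μ) / 2 * T = 0 := by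
    simp only [T]
    field_simp [(sub_pos.mpr hlt).ne']
    ring
  linarith [hline T hT, hge T hT]

theorem stmt_6_general (lam μ θ : ℝ) (hμ : 0 < μ) (hθ : 0 < θ)
    (hle : lam ≤ μ) (q : ℝ → ℝ) (hcrit : lam = μ → q 0 < 1)
    (hq : ∀ t : ℝ, 0 ≤ t →
      HasDerivAt q (lam - θ * max (q t - 1) 0 - μ * min (q t) 1) t) :
    ∃ t₀ : ℝ, 0 ≤ t₀ ∧ ∀ t : ℝ, t₀ ≤ t → q t < 1 := by
  obtain ⟨t₀, ht₀, hq₀⟩ : ∃ t, 0 ≤ t ∧ q t < 1 := by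
    rcases hle.lt_or_eq with hlt | heq
    · exact exists_fluid_lt_one hθ.le hlt hq
    · exact ⟨0, le_rfl, hcrit heq⟩
  exact ⟨t₀, ht₀, fluid_lt_one_of_lt_one hμ hle (fun t ht => hq t (ht₀.trans ht)) hq₀⟩

/-- If `λ ≤ μ` (with `q₀ < 1` in the critical case `λ = μ`), then eventually `q_t < 1`. -/
theorem stmt_6 (lam μ θ : ℝ) (hlam : 0 < lam) (hμ : 0 < μ) (hθ : 0 < θ)
    (hle : lam ≤ μ) (q : ℝ → ℝ) (hq0 : 0 ≤ q 0) (hcrit : lam = μ → q 0 < 1)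
    (hq : ∀ t : ℝ, 0 ≤ t →
      HasDerivAt q (lam - θ * max (q t - 1) 0 - μ * min (q t) 1) t) :
    ∃ t₀ : ℝ, 0 ≤ t₀ ∧ ∀ t : ℝ, t₀ ≤ t → q t < 1 :=
  stmt_6_general lam μ θ hμ hθ hle q hcrit hq
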